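/- Let F₁, F₂ be C¹ CDFs of absolutely continuous distributions on [0,1]². If F₁^X ≤ F₂^X, F₁^Y ≤ F₂^Y pointwise and K₁ ≤ K₂ pointwise where Kₖ(s,t) = Fₖ^X(s) + Fₖ^Y(t) - Fₖ(s,t), then E₁[φ] ≥ E₂[φ] for every C² function φ with φ_x ≥ 0, φ_y ≥ 0, φ_{xy} ≥ 0. -/

import Mathlib

/-!
By the fundamental theorem of calculus, for `(x, y) ∈ [0,1]²`,
`φ(x,y) = φ(0,0) + ∫₀ˣ φₓ(s,0) ds + ∫₀ʸ φ_y(0,t) dt + ∫₀ˣ∫₀ʸ φₓᵧ(s,t) dt ds`.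
Writing each `∫₀ˣ` as an integral over `{s | s < x}` and integrating in `(x, y)` against `μ`,
Fubini turns the expectation into
`φ(0,0) + ∫ φₓ(s,0) μ(X > s) ds + ∫ φ_y(0,t) μ(Y > t) dt + ∫∫ φₓᵧ(s,t) μ(X > s, Y > t)`.
On `[0,1]²` these survival probabilities are `1 - Fˣ(s)`, `1 - Fʸ(t)` and, by inclusion–exclusion,
`1 - K(s,t)`, so the three hypotheses on `F₁, F₂` say that each weight is larger under `μ₁`,
while the sign conditions on `φ` make each term increasing in its weight.
-/

open Set MeasureTheory Function

noncomputable def partialFst (f : ℝ → ℝ → ℝ) (s t : ℝ) : ℝ := deriv (fun x => f x t) s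

noncomputable def partialSnd (f : ℝ → ℝ → ℝ) (s t : ℝ) : ℝ := deriv (f s) t

section Calculus

variable {f : ℝ → ℝ → ℝ} {s t : ℝ}

theorem hasDerivAt_partialFst (hf : DifferentiableAt ℝ (uncurry f) (s, t)) :
    HasDerivAt (fun x => f x t) (partialFst f s t) s :=
  (DifferentiableAt.comp (g := uncurry f) (f := fun x => (x, t)) s hf
    (differentiableAt_id.prodMk (differentiableAt_const t))).hasDerivAt

theorem hasDerivAt_partialSnd (hf : DifferentiableAt ℝ (uncurry f) (s, t)) :
    HasDerivAt (f s) (partialSnd f s t) t :=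
  (DifferentiableAt.comp (g := uncurry f) (f := fun y => (s, y)) t hf
    ((differentiableAt_const s).prodMk differentiableAt_id)).hasDerivAt

theorem partialFst_eq_fderiv (hf : DifferentiableAt ℝ (uncurry f) (s, t)) :
    partialFst f s t = fderiv ℝ (uncurry f) (s, t) (1, 0) :=
  (hf.hasFDerivAt.comp_hasDerivAt (l := uncurry f) s
    ((hasDerivAt_id' s).prodMk (hasDerivAt_const s t))).deriv

theorem partialSnd_eq_fderiv (hf : DifferentiableAt ℝ (uncurry f) (s, t)) :
    partialSnd f s t = fderiv ℝ (uncurry f) (s, t) (0, 1) :=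
  (hf.hasFDerivAt.comp_hasDerivAt (l := uncurry f) t
    ((hasDerivAt_const t s).prodMk (hasDerivAt_id' t))).deriv

theorem contDiff_partialFst {n : WithTop ℕ∞} (hf : ContDiff ℝ (n + 1) (uncurry f)) :
    ContDiff ℝ n (uncurry (partialFst f)) := by
  have hd : Differentiable ℝ (uncurry f) := hf.differentiable (by simp)
  have : uncurry (partialFst f) = fun p => fderiv ℝ (uncurry f) p (1, 0) :=
    funext fun p => partialFst_eq_fderiv (hd p)
  rw [this]
  exact (hf.fderiv_right le_rfl).clm_apply contDiff_const

theorem contDiff_partialSnd {n : WithTop ℕ∞} (hf : ContDiff ℝ (n + 1) (uncurry f)) :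
    ContDiff ℝ n (uncurry (partialSnd f)) := by
  have hd : Differentiable ℝ (uncurry f) := hf.differentiable (by simp)
  have : uncurry (partialSnd f) = fun p => fderiv ℝ (uncurry f) p (0, 1) :=
    funext fun p => partialSnd_eq_fderiv (hd p)
  rw [this]
  exact (hf.fderiv_right le_rfl).clm_apply contDiff_const

theorem continuous_partialFst (hf : ContDiff ℝ 1 (uncurry f)) :
    Continuous (uncurry (partialFst f)) :=
  (contDiff_partialFst (n := 0) hf).continuous

theorem continuous_partialSnd (hf : ContDiff ℝ 1 (uncurry f)) :
    Continuous (uncurry (partialSnd f)) :=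
  (contDiff_partialSnd (n := 0) hf).continuous

theorem integrableOn_partialFst (hf : ContDiff ℝ 1 (uncurry f)) (t a b : ℝ) :
    IntegrableOn (partialFst f · t) (Ioo a b) :=
  ((continuous_partialFst hf).uncurry_right t).integrableOn_Icc.mono_set Ioo_subset_Icc_self

theorem integrableOn_partialSnd (hf : ContDiff ℝ 1 (uncurry f)) (s a b : ℝ) :
    IntegrableOn (partialSnd f s) (Ioo a b) :=
  ((continuous_partialSnd hf).uncurry_left s).integrableOn_Icc.mono_set Ioo_subset_Icc_self

theorem integral_partialFst (hf : ContDiff ℝ 1 (uncurry f)) (a x t : ℝ) :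
    ∫ s in a..x, partialFst f s t = f x t - f a t :=
  intervalIntegral.integral_eq_sub_of_hasDerivAt
    (fun _ _ => hasDerivAt_partialFst (hf.differentiable one_ne_zero _))
    (((continuous_partialFst hf).uncurry_right t).intervalIntegrable a x)

theorem integral_partialSnd (hf : ContDiff ℝ 1 (uncurry f)) (s b y : ℝ) :
    ∫ t in b..y, partialSnd f s t = f s y - f s b :=
  intervalIntegral.integral_eq_sub_of_hasDerivAt
    (fun _ _ => hasDerivAt_partialSnd (hf.differentiable one_ne_zero _))
    (((continuous_partialSnd hf).uncurry_left s).intervalIntegrable b y)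

-- Differentiating first in `s`, then in `t`, matches the order of the iterated integral, so no
-- symmetry of second derivatives is needed.
theorem eq_add_integral_partialFst_add_integral_partialSnd (hf : ContDiff ℝ 2 (uncurry f))
    (a b x y : ℝ) :
    f x y = f a b + (∫ s in a..x, partialFst f s b) + (∫ t in b..y, partialSnd f a t)
      + ∫ s in a..x, ∫ t in b..y, partialSnd (partialFst f) s t := by
  have hf' : ContDiff ℝ 1 (uncurry f) := hf.of_le one_le_two
  have hf₁ : ContDiff ℝ 1 (uncurry (partialFst f)) := contDiff_partialFst hf
  have hcont (t : ℝ) : Continuous (partialFst f · t) := hf₁.continuous.uncurry_right t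
  have hmixed : ∫ s in a..x, ∫ t in b..y, partialSnd (partialFst f) s t
      = (∫ s in a..x, partialFst f s y) - ∫ s in a..x, partialFst f s b := by
    simp_rw [integral_partialSnd hf₁]
    exact intervalIntegral.integral_sub ((hcont y).intervalIntegrable a x)
      ((hcont b).intervalIntegrable a x)
  rw [hmixed, integral_partialFst hf' a x b, integral_partialFst hf' a x y,
    integral_partialSnd hf']
  ring

end Calculus

section Fubini

variable {α β : Type*} [MeasurableSpace α] [MeasurableSpace β] {μ : Measure α} {ν : Measure β}
  [IsFiniteMeasure μ] (S : α → Set β) {h : β → ℝ}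

theorem setIntegral_eq_integral_indicator_prod (hS : MeasurableSet {x : α × β | x.2 ∈ S x.1})
    (a : α) :
    ∫ b in S a, h b ∂ν = ∫ b, {x : α × β | x.2 ∈ S x.1}.indicator (h ·.2) (a, b) ∂ν := by
  rw [← integral_indicator (show MeasurableSet (S a) from measurable_prodMk_left hS)]
  rfl

theorem integrable_setIntegral_of_measurableSet [SFinite ν]
    (hS : MeasurableSet {x : α × β | x.2 ∈ S x.1}) (hh : Integrable h ν) :
    Integrable (fun a => ∫ b in S a, h b ∂ν) μ := by
  simp_rw [setIntegral_eq_integral_indicator_prod S hS]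
  exact ((hh.comp_snd μ).indicator hS).integral_prod_left

theorem integral_setIntegral_eq_integral_measureReal_mul [SFinite ν]
    (hS : MeasurableSet {x : α × β | x.2 ∈ S x.1}) (hh : Integrable h ν) :
    ∫ a, ∫ b in S a, h b ∂ν ∂μ = ∫ b, μ.real {a | b ∈ S a} * h b ∂ν := by
  simp_rw [setIntegral_eq_integral_indicator_prod S hS]
  rw [integral_integral_swap
    (f := fun a b => {x : α × β | x.2 ∈ S x.1}.indicator (h ·.2) (a, b))
    ((hh.comp_snd μ).indicator hS)]
  congr 1 with b
  rw [← smul_eq_mul, ← integral_indicator_const _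
    (show MeasurableSet {a | b ∈ S a} from measurable_prodMk_right hS)]
  rfl

theorem integrable_measureReal_mem_mul (hS : MeasurableSet {x : α × β | x.2 ∈ S x.1})
    (hh : Integrable h ν) : Integrable (fun b => μ.real {a | b ∈ S a} * h b) ν :=
  hh.bdd_mul (c := μ.real univ)
    (measurable_measure_prodMk_right hS).ennreal_toReal.aestronglyMeasurable
    (ae_of_all _ fun _ => by
      rw [Real.norm_of_nonneg measureReal_nonneg]
      exact measureReal_mono (subset_univ _))

end Fubini

theorem Iio_inter_Ioo_of_mem_Icc {α : Type*} [LinearOrder α] {a b x : α} (hx : x ∈ Icc a b) :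
    Iio x ∩ Ioo a b = Ioo a x := by
  rw [Iio_inter_Ioo, min_eq_left hx.2]

theorem Continuous.integrableOn_Ioo_prod_Ioo {g : ℝ × ℝ → ℝ} (hg : Continuous g) (a b c d : ℝ) :
    IntegrableOn g (Ioo a b ×ˢ Ioo c d) :=
  hg.integrableOn_Icc.mono_set <| by
    rw [← Icc_prod_Icc]
    exact prod_mono Ioo_subset_Icc_self Ioo_subset_Icc_self

theorem setIntegral_Iio_restrict_Ioo {g : ℝ → ℝ} {a b x : ℝ} (hx : x ∈ Icc a b) :
    ∫ s in Iio x, g s ∂(volume.restrict (Ioo a b)) = ∫ s in a..x, g s := by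
  rw [Measure.restrict_restrict measurableSet_Iio, Iio_inter_Ioo_of_mem_Icc hx,
    intervalIntegral.integral_of_le hx.1, integral_Ioc_eq_integral_Ioo]

theorem setIntegral_Iio_prod_restrict_Ioo_prod {g : ℝ → ℝ → ℝ} (hg : Continuous (uncurry g))
    {a b c d x y : ℝ} (hx : x ∈ Icc a b) (hy : y ∈ Icc c d) :
    ∫ q in Iio x ×ˢ Iio y, g q.1 q.2 ∂(volume.restrict (Ioo a b ×ˢ Ioo c d))
      = ∫ s in a..x, ∫ t in c..y, g s t := by
  rw [Measure.restrict_restrict (measurableSet_Iio.prod measurableSet_Iio), prod_inter_prod,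
    Iio_inter_Ioo_of_mem_Icc hx, Iio_inter_Ioo_of_mem_Icc hy, Measure.volume_eq_prod]
  refine (setIntegral_prod (uncurry g) (hg.integrableOn_Ioo_prod_Ioo a x c y)).trans ?_
  rw [intervalIntegral.integral_of_le hx.1, integral_Ioc_eq_integral_Ioo]
  refine setIntegral_congr_fun measurableSet_Ioo fun s _ => ?_
  rw [intervalIntegral.integral_of_le hy.1, integral_Ioc_eq_integral_Ioo]
  rfl

section UnitSquare

variable {μ ν : Measure (ℝ × ℝ)} {φ : ℝ → ℝ → ℝ}

theorem measurableSet_mem_Iio_fst : MeasurableSet {z : (ℝ × ℝ) × ℝ | z.2 ∈ Iio z.1.1} :=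
  measurableSet_lt measurable_snd measurable_fst.fst

theorem measurableSet_mem_Iio_snd : MeasurableSet {z : (ℝ × ℝ) × ℝ | z.2 ∈ Iio z.1.2} :=
  measurableSet_lt measurable_snd measurable_fst.snd

theorem measurableSet_mem_Iio_prod_Iio :
    MeasurableSet {z : (ℝ × ℝ) × (ℝ × ℝ) | z.2 ∈ Iio z.1.1 ×ˢ Iio z.1.2} :=
  (measurableSet_lt measurable_snd.fst measurable_fst.fst).inter
    (measurableSet_lt measurable_snd.snd measurable_fst.snd)

theorem integral_eq_add_integral_measureReal_lt_mul [IsFiniteMeasure μ]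
    (hμ : μ (Icc ((0, 0) : ℝ × ℝ) (1, 1))ᶜ = 0) (hφ : ContDiff ℝ 2 (uncurry φ)) :
    ∫ p, φ p.1 p.2 ∂μ = μ.real univ * φ 0 0
      + (∫ s in Ioo 0 1, μ.real {p | s < p.1} * partialFst φ s 0)
      + (∫ t in Ioo 0 1, μ.real {p | t < p.2} * partialSnd φ 0 t)
      + ∫ q in Ioo 0 1 ×ˢ Ioo 0 1,
          μ.real {p | q.1 < p.1 ∧ q.2 < p.2} * partialSnd (partialFst φ) q.1 q.2 := by
  have hφ₁₂ := continuous_partialSnd (contDiff_partialFst hφ)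
  have hg₁ := integrableOn_partialFst (hφ.of_le one_le_two) 0 0 1
  have hg₂ := integrableOn_partialSnd (hφ.of_le one_le_two) 0 0 1
  have hg₁₂ := hφ₁₂.integrableOn_Ioo_prod_Ioo 0 1 0 1
  have hpt : ∀ᵐ p ∂μ, φ p.1 p.2 = φ 0 0
      + (∫ s in Iio p.1, partialFst φ s 0 ∂volume.restrict (Ioo 0 1))
      + (∫ t in Iio p.2, partialSnd φ 0 t ∂volume.restrict (Ioo 0 1))
      + ∫ q in Iio p.1 ×ˢ Iio p.2, uncurry (partialSnd (partialFst φ)) q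
          ∂volume.restrict (Ioo 0 1 ×ˢ Ioo 0 1) := by
    filter_upwards [mem_ae_iff.2 hμ] with p hp
    rw [← Icc_prod_Icc] at hp
    rw [eq_add_integral_partialFst_add_integral_partialSnd hφ 0 0 p.1 p.2,
      setIntegral_Iio_restrict_Ioo hp.1, setIntegral_Iio_restrict_Ioo hp.2,
      ← setIntegral_Iio_prod_restrict_Ioo_prod hφ₁₂ hp.1 hp.2]
    rfl
  have hI₁ := integrable_setIntegral_of_measurableSet (μ := μ) (fun p : ℝ × ℝ => Iio p.1)
      measurableSet_mem_Iio_fst hg₁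
  have hI₂ := integrable_setIntegral_of_measurableSet (μ := μ) (fun p : ℝ × ℝ => Iio p.2)
      measurableSet_mem_Iio_snd hg₂
  have hI₁₂ :=
    integrable_setIntegral_of_measurableSet (μ := μ) (fun p : ℝ × ℝ => Iio p.1 ×ˢ Iio p.2)
      measurableSet_mem_Iio_prod_Iio hg₁₂
  rw [integral_congr_ae hpt, integral_add (by fun_prop) hI₁₂, integral_add (by fun_prop) hI₂,
    integral_add (by fun_prop) hI₁, integral_const, smul_eq_mul,
    integral_setIntegral_eq_integral_measureReal_mul (fun p : ℝ × ℝ => Iio p.1)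
      measurableSet_mem_Iio_fst hg₁,
    integral_setIntegral_eq_integral_measureReal_mul (fun p : ℝ × ℝ => Iio p.2)
      measurableSet_mem_Iio_snd hg₂,
    integral_setIntegral_eq_integral_measureReal_mul (fun p : ℝ × ℝ => Iio p.1 ×ˢ Iio p.2)
      measurableSet_mem_Iio_prod_Iio hg₁₂]
  rfl

theorem integrableOn_measureReal_lt_fst_mul [IsFiniteMeasure μ] {g : ℝ → ℝ} {T : Set ℝ}
    (hg : IntegrableOn g T) : IntegrableOn (fun s => μ.real {p | s < p.1} * g s) T :=
  integrable_measureReal_mem_mul (fun p : ℝ × ℝ => Iio p.1) measurableSet_mem_Iio_fst hg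

theorem integrableOn_measureReal_lt_snd_mul [IsFiniteMeasure μ] {g : ℝ → ℝ} {T : Set ℝ}
    (hg : IntegrableOn g T) : IntegrableOn (fun t => μ.real {p | t < p.2} * g t) T :=
  integrable_measureReal_mem_mul (fun p : ℝ × ℝ => Iio p.2) measurableSet_mem_Iio_snd hg

theorem integrableOn_measureReal_lt_fst_and_lt_snd_mul [IsFiniteMeasure μ] {g : ℝ × ℝ → ℝ}
    {T : Set (ℝ × ℝ)} (hg : IntegrableOn g T) :
    IntegrableOn (fun q => μ.real {p | q.1 < p.1 ∧ q.2 < p.2} * g q) T :=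
  integrable_measureReal_mem_mul (fun p : ℝ × ℝ => Iio p.1 ×ˢ Iio p.2)
    measurableSet_mem_Iio_prod_Iio hg

theorem integral_le_integral_of_measureReal_lt_le
    [IsProbabilityMeasure μ] [IsProbabilityMeasure ν]
    (hμ : μ (Icc ((0, 0) : ℝ × ℝ) (1, 1))ᶜ = 0) (hν : ν (Icc ((0, 0) : ℝ × ℝ) (1, 1))ᶜ = 0)
    (hX : ∀ s ∈ Ioo (0 : ℝ) 1, ν.real {p | s < p.1} ≤ μ.real {p | s < p.1})
    (hY : ∀ t ∈ Ioo (0 : ℝ) 1, ν.real {p | t < p.2} ≤ μ.real {p | t < p.2})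
    (hXY : ∀ s ∈ Ioo (0 : ℝ) 1, ∀ t ∈ Ioo (0 : ℝ) 1,
      ν.real {p | s < p.1 ∧ t < p.2} ≤ μ.real {p | s < p.1 ∧ t < p.2})
    (hφ : ContDiff ℝ 2 (uncurry φ))
    (hφx : ∀ s ∈ Ioo (0 : ℝ) 1, 0 ≤ partialFst φ s 0)
    (hφy : ∀ t ∈ Ioo (0 : ℝ) 1, 0 ≤ partialSnd φ 0 t)
    (hφxy : ∀ s ∈ Ioo (0 : ℝ) 1, ∀ t ∈ Ioo (0 : ℝ) 1, 0 ≤ partialSnd (partialFst φ) s t) :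
    ∫ p, φ p.1 p.2 ∂ν ≤ ∫ p, φ p.1 p.2 ∂μ := by
  have hg₁ := integrableOn_partialFst (hφ.of_le one_le_two) 0 0 1
  have hg₂ := integrableOn_partialSnd (hφ.of_le one_le_two) 0 0 1
  have hg₁₂ := (continuous_partialSnd (contDiff_partialFst hφ)).integrableOn_Ioo_prod_Ioo 0 1 0 1
  rw [integral_eq_add_integral_measureReal_lt_mul hν hφ,
    integral_eq_add_integral_measureReal_lt_mul hμ hφ, probReal_univ, probReal_univ]
  refine add_le_add (add_le_add (add_le_add le_rfl ?_) ?_) ?_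
  · exact setIntegral_mono_on (integrableOn_measureReal_lt_fst_mul hg₁)
      (integrableOn_measureReal_lt_fst_mul hg₁) measurableSet_Ioo
      fun s hs => mul_le_mul_of_nonneg_right (hX s hs) (hφx s hs)
  · exact setIntegral_mono_on (integrableOn_measureReal_lt_snd_mul hg₂)
      (integrableOn_measureReal_lt_snd_mul hg₂) measurableSet_Ioo
      fun t ht => mul_le_mul_of_nonneg_right (hY t ht) (hφy t ht)
  · exact setIntegral_mono_on (integrableOn_measureReal_lt_fst_and_lt_snd_mul hg₁₂)
      (integrableOn_measureReal_lt_fst_and_lt_snd_mul hg₁₂)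
      (measurableSet_Ioo.prod measurableSet_Ioo)
      fun q hq => mul_le_mul_of_nonneg_right (hXY q.1 hq.1 q.2 hq.2) (hφxy q.1 hq.1 q.2 hq.2)

theorem measureReal_fst_le_eq_measureReal_Iic (hμ : μ (Icc ((0, 0) : ℝ × ℝ) (1, 1))ᶜ = 0)
    (s : ℝ) : μ.real {p | p.1 ≤ s} = μ.real (Iic (s, 1)) := by
  simp only [measureReal_def]
  rw [← measure_inter_conull hμ, ← measure_inter_conull (s := Iic (s, 1)) hμ]
  congr 2 with p
  simp only [mem_inter_iff, mem_ofPred_eq, mem_Iic, mem_Icc, Prod.le_def]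
  tauto

theorem measureReal_snd_le_eq_measureReal_Iic (hμ : μ (Icc ((0, 0) : ℝ × ℝ) (1, 1))ᶜ = 0)
    (t : ℝ) : μ.real {p | p.2 ≤ t} = μ.real (Iic (1, t)) := by
  simp only [measureReal_def]
  rw [← measure_inter_conull hμ, ← measure_inter_conull (s := Iic (1, t)) hμ]
  congr 2 with p
  simp only [mem_inter_iff, mem_ofPred_eq, mem_Iic, mem_Icc, Prod.le_def]
  tauto

variable [IsProbabilityMeasure μ]

theorem measureReal_lt_fst_eq_one_sub (hμ : μ (Icc ((0, 0) : ℝ × ℝ) (1, 1))ᶜ = 0) (s : ℝ) :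
    μ.real {p | s < p.1} = 1 - μ.real (Iic (s, 1)) := by
  rw [← measureReal_fst_le_eq_measureReal_Iic hμ,
    ← probReal_compl_eq_one_sub (measurableSet_le measurable_fst measurable_const)]
  simp only [compl_ofPred, not_le]

theorem measureReal_lt_snd_eq_one_sub (hμ : μ (Icc ((0, 0) : ℝ × ℝ) (1, 1))ᶜ = 0) (t : ℝ) :
    μ.real {p | t < p.2} = 1 - μ.real (Iic (1, t)) := by
  rw [← measureReal_snd_le_eq_measureReal_Iic hμ,
    ← probReal_compl_eq_one_sub (measurableSet_le measurable_snd measurable_const)]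
  simp only [compl_ofPred, not_le]

theorem measureReal_lt_fst_and_lt_snd_eq_one_sub
    (hμ : μ (Icc ((0, 0) : ℝ × ℝ) (1, 1))ᶜ = 0) (s t : ℝ) :
    μ.real {p | s < p.1 ∧ t < p.2}
      = 1 - (μ.real (Iic (s, 1)) + μ.real (Iic (1, t)) - μ.real (Iic (s, t))) := by
  have hle₁ : MeasurableSet {p : ℝ × ℝ | p.1 ≤ s} :=
    measurableSet_le measurable_fst measurable_const
  have hle₂ : MeasurableSet {p : ℝ × ℝ | p.2 ≤ t} :=
    measurableSet_le measurable_snd measurable_const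
  have hcompl : {p : ℝ × ℝ | s < p.1 ∧ t < p.2} = ({p | p.1 ≤ s} ∪ {p | p.2 ≤ t})ᶜ := by
    ext p
    simp only [mem_ofPred_eq, mem_compl_iff, mem_union, not_or, not_le]
  have hinter : {p : ℝ × ℝ | p.1 ≤ s} ∩ {p | p.2 ≤ t} = Iic (s, t) := rfl
  have hunion := measureReal_union_add_inter (μ := μ) (s := {p : ℝ × ℝ | p.1 ≤ s}) hle₂
  rw [hinter, measureReal_fst_le_eq_measureReal_Iic hμ,
    measureReal_snd_le_eq_measureReal_Iic hμ] at hunion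
  rw [hcompl, probReal_compl_eq_one_sub (hle₁.union hle₂)]
  linarith

end UnitSquare

theorem first_order_dominance_supermodular_absolutely_continuous_general
    (μ₁ μ₂ : Measure (ℝ × ℝ)) [IsProbabilityMeasure μ₁] [IsProbabilityMeasure μ₂]
    (hs₁ : μ₁ (Icc ((0, 0) : ℝ × ℝ) (1, 1))ᶜ = 0)
    (hs₂ : μ₂ (Icc ((0, 0) : ℝ × ℝ) (1, 1))ᶜ = 0)
    (F₁ F₂ : ℝ → ℝ → ℝ)
    (hF₁ : ∀ s t : ℝ, F₁ s t = (μ₁ (Iic ((s, t) : ℝ × ℝ))).toReal)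
    (hF₂ : ∀ s t : ℝ, F₂ s t = (μ₂ (Iic ((s, t) : ℝ × ℝ))).toReal)
    (hX : ∀ s ∈ Icc (0 : ℝ) 1, F₁ s 1 ≤ F₂ s 1)
    (hY : ∀ t ∈ Icc (0 : ℝ) 1, F₁ 1 t ≤ F₂ 1 t)
    (hK : ∀ s ∈ Icc (0 : ℝ) 1, ∀ t ∈ Icc (0 : ℝ) 1,
      F₁ s 1 + F₁ 1 t - F₁ s t ≤ F₂ s 1 + F₂ 1 t - F₂ s t)
    (φ : ℝ → ℝ → ℝ)
    (hφ : ContDiff ℝ 2 (fun p : ℝ × ℝ => φ p.1 p.2))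
    (hφx : ∀ s ∈ Icc (0 : ℝ) 1, ∀ t ∈ Icc (0 : ℝ) 1,
      0 ≤ deriv (fun s' => φ s' t) s)
    (hφy : ∀ s ∈ Icc (0 : ℝ) 1, ∀ t ∈ Icc (0 : ℝ) 1,
      0 ≤ deriv (fun t' => φ s t') t)
    (hφxy : ∀ s ∈ Icc (0 : ℝ) 1, ∀ t ∈ Icc (0 : ℝ) 1,
      0 ≤ deriv (fun t' => deriv (fun s' => φ s' t') s) t) :
    ∫ p, φ p.1 p.2 ∂μ₁ ≥ ∫ p, φ p.1 p.2 ∂μ₂ := by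
  have h01 : (0 : ℝ) ∈ Icc 0 1 := ⟨le_rfl, zero_le_one⟩
  refine integral_le_integral_of_measureReal_lt_le hs₁ hs₂ (fun s hs => ?_) (fun t ht => ?_)
    (fun s hs t ht => ?_) hφ (fun s hs => hφx s (Ioo_subset_Icc_self hs) 0 h01)
    (fun t ht => hφy 0 h01 t (Ioo_subset_Icc_self ht))
    (fun s hs t ht => hφxy s (Ioo_subset_Icc_self hs) t (Ioo_subset_Icc_self ht))
  · have hcdf := hX s (Ioo_subset_Icc_self hs)
    rw [hF₁, hF₂] at hcdf
    rw [measureReal_lt_fst_eq_one_sub hs₁, measureReal_lt_fst_eq_one_sub hs₂]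
    exact sub_le_sub_left hcdf 1
  · have hcdf := hY t (Ioo_subset_Icc_self ht)
    rw [hF₁, hF₂] at hcdf
    rw [measureReal_lt_snd_eq_one_sub hs₁, measureReal_lt_snd_eq_one_sub hs₂]
    exact sub_le_sub_left hcdf 1
  · have hcdf := hK s (Ioo_subset_Icc_self hs) t (Ioo_subset_Icc_self ht)
    simp only [hF₁, hF₂] at hcdf
    rw [measureReal_lt_fst_and_lt_snd_eq_one_sub hs₁,
      measureReal_lt_fst_and_lt_snd_eq_one_sub hs₂]
    exact sub_le_sub_left hcdf 1

theorem first_order_dominance_supermodular_absolutely_continuous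
    (μ₁ μ₂ : Measure (ℝ × ℝ)) [IsProbabilityMeasure μ₁] [IsProbabilityMeasure μ₂]
    (hac₁ : μ₁ ≪ volume) (hac₂ : μ₂ ≪ volume)
    (hs₁ : μ₁ (Icc ((0, 0) : ℝ × ℝ) (1, 1))ᶜ = 0)
    (hs₂ : μ₂ (Icc ((0, 0) : ℝ × ℝ) (1, 1))ᶜ = 0)
    (F₁ F₂ : ℝ → ℝ → ℝ)
    (hF₁ : ∀ s t : ℝ, F₁ s t = (μ₁ (Iic ((s, t) : ℝ × ℝ))).toReal)
    (hF₂ : ∀ s t : ℝ, F₂ s t = (μ₂ (Iic ((s, t) : ℝ × ℝ))).toReal)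
    (hF₁c : ContDiff ℝ 1 (fun p : ℝ × ℝ => F₁ p.1 p.2))
    (hF₂c : ContDiff ℝ 1 (fun p : ℝ × ℝ => F₂ p.1 p.2))
    (hX : ∀ s ∈ Icc (0 : ℝ) 1, F₁ s 1 ≤ F₂ s 1)
    (hY : ∀ t ∈ Icc (0 : ℝ) 1, F₁ 1 t ≤ F₂ 1 t)
    (hK : ∀ s ∈ Icc (0 : ℝ) 1, ∀ t ∈ Icc (0 : ℝ) 1,
      F₁ s 1 + F₁ 1 t - F₁ s t ≤ F₂ s 1 + F₂ 1 t - F₂ s t)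
    (φ : ℝ → ℝ → ℝ)
    (hφ : ContDiff ℝ 2 (fun p : ℝ × ℝ => φ p.1 p.2))
    (hφx : ∀ s ∈ Icc (0 : ℝ) 1, ∀ t ∈ Icc (0 : ℝ) 1,
      0 ≤ deriv (fun s' => φ s' t) s)
    (hφy : ∀ s ∈ Icc (0 : ℝ) 1, ∀ t ∈ Icc (0 : ℝ) 1,
      0 ≤ deriv (fun t' => φ s t') t)
    (hφxy : ∀ s ∈ Icc (0 : ℝ) 1, ∀ t ∈ Icc (0 : ℝ) 1,
      0 ≤ deriv (fun t' => deriv (fun s' => φ s' t') s) t) :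
    ∫ p, φ p.1 p.2 ∂μ₁ ≥ ∫ p, φ p.1 p.2 ∂μ₂ :=
  first_order_dominance_supermodular_absolutely_continuous_general μ₁ μ₂ hs₁ hs₂ F₁ F₂ hF₁ hF₂ hX hY
    hK φ hφ hφx hφy hφxy
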